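/- arXiv:2506.17240 — 4 statements merged into one kernel-verified Lean document; each statement's English description precedes it below -/
import Mathlib

section
/- Let ABCD be a convex quadrilateral and let E, F, G, H be the orthocenters of triangles BCD, CDA, DAB, ABC respectively. Then quadrilaterals ABCD and EFGH have equal area. -/
/-- Shoelace area of a quadrilateral PQRS in the plane. -/
noncomputable def quadArea (P Q R S : EuclideanSpace ℝ (Fin 2)) : ℝ :=
  |P 0 * (Q 1 - S 1) + Q 0 * (R 1 - P 1) + R 0 * (S 1 - Q 1) + S 0 * (P 1 - R 1)| / 2

/-- `X` is the orthocenter of triangle `PQR`: it lies on all three altitudes. -/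
def IsOrthocenter (X P Q R : EuclideanSpace ℝ (Fin 2)) : Prop :=
  (inner ℝ (X - P) (Q - R) : ℝ) = 0 ∧ (inner ℝ (X - Q) (R - P) : ℝ) = 0 ∧
    (inner ℝ (X - R) (P - Q) : ℝ) = 0

/-!
Twice the shoelace area of a quadrilateral is the cross product of its diagonals, so with
`u = C - A`, `v = D - B`, `p = G - E`, `q = H - F` it suffices to show `p × q = u × v`.
As `E` and `G` lie on the altitudes from `C` and `A` onto `BD`, `p ⬝ v = -(u ⬝ v)`; likewise
`q ⬝ u = -(u ⬝ v)`. Solving for the orthocenters by Cramer's rule expresses `p ⬝ u` and `q ⬝ v`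
as `-|v|²` and `-|u|²` times reciprocal ratios of signed triangle areas, so
`(p ⬝ u) (q ⬝ v) = |u|² |v|²`, and then the planar Lagrange identity
`(p × q) (u × v) = (p ⬝ u) (q ⬝ v) - (p ⬝ v) (q ⬝ u)` yields `(p × q) (u × v) = (u × v)²`.
Finally `u × v ≠ 0` because the diagonals of a convex quadrilateral cross.
-/

open RealInnerProductSpace

local notation "ℝ²" => EuclideanSpace ℝ (Fin 2)

def cross (u v : ℝ²) : ℝ := u 0 * v 1 - u 1 * v 0

noncomputable def signedArea (P Q R : ℝ²) : ℝ := cross (Q - P) (R - P) / 2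

lemma real_inner_fin_two (u v : ℝ²) : ⟪u, v⟫ = u 0 * v 0 + u 1 * v 1 := by
  simp [PiLp.inner_apply, Fin.sum_univ_two, mul_comm]

lemma cross_mul_cross (p q u v : ℝ²) :
    cross p q * cross u v = ⟪p, u⟫ * ⟪q, v⟫ - ⟪p, v⟫ * ⟪q, u⟫ := by
  simp only [cross, real_inner_fin_two]
  ring

lemma quadArea_eq_abs_cross_diagonals (P Q R S : ℝ²) :
    quadArea P Q R S = |cross (R - P) (S - Q)| / 2 := by
  simp only [quadArea, cross, PiLp.sub_apply]
  congr 2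
  ring

lemma signedArea_rotate (P Q R : ℝ²) : signedArea Q R P = signedArea P Q R := by
  simp only [signedArea, cross, PiLp.sub_apply]
  ring

lemma collinear_of_signedArea_eq_zero {P Q R : ℝ²} (h : signedArea P Q R = 0) :
    Collinear ℝ {P, Q, R} := by
  rcases eq_or_ne P Q with rfl | hPQ
  · simpa using collinear_pair ℝ P R
  have hQP : ⟪Q - P, Q - P⟫ ≠ 0 := inner_self_ne_zero.2 (sub_ne_zero.2 hPQ.symm)
  have hR : AffineMap.lineMap P Q (⟪R - P, Q - P⟫ / ⟪Q - P, Q - P⟫) = R := by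
    simp only [signedArea, cross, PiLp.sub_apply] at h
    simp only [real_inner_fin_two, PiLp.sub_apply, ← sq] at hQP ⊢
    rw [AffineMap.lineMap_apply, vsub_eq_sub, vadd_eq_add]
    ext i
    fin_cases i <;>
      simp only [Fin.zero_eta, Fin.mk_one, PiLp.add_apply, PiLp.smul_apply, PiLp.sub_apply,
        smul_eq_mul] <;>
      field_simp
    · linear_combination (2 * (Q 1 - P 1)) * h
    · linear_combination (-2 * (Q 0 - P 0)) * h
  have hRPQ : Collinear ℝ {R, P, Q} :=
    collinear_insert_of_mem_affineSpan_pair (hR ▸ AffineMap.lineMap_mem_affineSpan_pair _ P Q)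
  rwa [Set.insert_comm, Set.pair_comm] at hRPQ

lemma signedArea_ne_zero_of_not_collinear {P Q R : ℝ²} (h : ¬ Collinear ℝ {P, Q, R}) :
    signedArea P Q R ≠ 0 :=
  fun h0 => h (collinear_of_signedArea_eq_zero h0)

lemma cross_diagonals_ne_zero {A B C D : ℝ²} (hinter : ∃ P, P ∈ segment ℝ A C ∧ P ∈ segment ℝ B D)
    (hABC : signedArea A B C ≠ 0) : cross (C - A) (D - B) ≠ 0 := by
  obtain ⟨P, hAC, hBD⟩ := hinter
  rw [segment_eq_image'] at hAC hBD
  obtain ⟨t, -, rfl⟩ := hAC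
  obtain ⟨t', -, hP⟩ := hBD
  have h0 := congrArg (· 0) hP
  have h1 := congrArg (· 1) hP
  simp only [PiLp.add_apply, PiLp.smul_apply, PiLp.sub_apply, smul_eq_mul] at h0 h1
  intro hs
  apply hABC
  simp only [signedArea, cross, PiLp.sub_apply] at hs ⊢
  linear_combination (C 1 - A 1) / 2 * h0 - (C 0 - A 0) / 2 * h1 + t' / 2 * hs

lemma inner_sub_orthocenter_diagonal {A B C D E G : ℝ²}
    (hE : IsOrthocenter E B C D) (hG : IsOrthocenter G D A B) :
    ⟪G - E, D - B⟫ = -⟪C - A, D - B⟫ := by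
  have hE₂ := hE.2.1
  have hG₂ := hG.2.1
  simp only [real_inner_fin_two, PiLp.sub_apply] at hE₂ hG₂ ⊢
  linear_combination -hE₂ - hG₂

lemma inner_sub_orthocenter_mul_signedArea {A B C D E G : ℝ²}
    (hE : IsOrthocenter E B C D) (hG : IsOrthocenter G D A B) :
    ⟪G - E, C - A⟫ * (signedArea D A B * signedArea B C D) =
      -(‖D - B‖ ^ 2 * signedArea C D A * signedArea A B C) := by
  obtain ⟨hE₁, hE₂, -⟩ := hE
  obtain ⟨hG₁, hG₂, -⟩ := hG
  rw [← real_inner_self_eq_norm_sq]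
  -- Cramer's rule on the altitude equations of `E` and of `G`, with denominators cleared
  linear_combination (norm := skip)
    signedArea B C D / 2 * cross (C - A) (B - D) * hG₁ +
    signedArea B C D / 2 * cross (A - B) (C - A) * hG₂ +
    signedArea D A B / 2 * cross (C - A) (B - D) * hE₁ +
    signedArea D A B / 2 * cross (C - A) (C - D) * hE₂
  simp only [real_inner_fin_two, signedArea, cross, PiLp.sub_apply]
  ring

theorem orthocenter_central_quadrilateral_area
    (A B C D E F G H : EuclideanSpace ℝ (Fin 2))
    (hconv : ∃ P, P ∈ segment ℝ A C ∧ P ∈ segment ℝ B D)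
    (h₁ : ¬ Collinear ℝ ({A, B, C} : Set (EuclideanSpace ℝ (Fin 2))))
    (h₂ : ¬ Collinear ℝ ({A, B, D} : Set (EuclideanSpace ℝ (Fin 2))))
    (h₃ : ¬ Collinear ℝ ({A, C, D} : Set (EuclideanSpace ℝ (Fin 2))))
    (h₄ : ¬ Collinear ℝ ({B, C, D} : Set (EuclideanSpace ℝ (Fin 2))))
    (hE : IsOrthocenter E B C D)
    (hF : IsOrthocenter F C D A)
    (hG : IsOrthocenter G D A B)
    (hH : IsOrthocenter H A B C) :
    quadArea A B C D = quadArea E F G H := by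
  have hABC := signedArea_ne_zero_of_not_collinear h₁
  have hDAB : signedArea D A B ≠ 0 := by
    rw [signedArea_rotate, signedArea_rotate]
    exact signedArea_ne_zero_of_not_collinear h₂
  have hCDA : signedArea C D A ≠ 0 := by
    rw [signedArea_rotate]
    exact signedArea_ne_zero_of_not_collinear h₃
  have hBCD := signedArea_ne_zero_of_not_collinear h₄
  have hpu := inner_sub_orthocenter_mul_signedArea hE hG
  have hpv := inner_sub_orthocenter_diagonal hE hG
  -- `F` and `H` play the roles of `E` and `G` for the quadrilateral `BCDA`
  have hqv := inner_sub_orthocenter_mul_signedArea hF hH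
  have hqu := inner_sub_orthocenter_diagonal hF hH
  rw [norm_sub_rev A C] at hqv
  rw [← neg_sub C A, inner_neg_right, inner_neg_right, neg_inj,
    real_inner_comm (C - A) (D - B)] at hqu
  have hprod : ⟪G - E, C - A⟫ * ⟪H - F, D - B⟫ = ‖C - A‖ ^ 2 * ‖D - B‖ ^ 2 := by
    refine mul_right_cancel₀ (mul_ne_zero (mul_ne_zero hDAB hBCD) (mul_ne_zero hABC hCDA)) ?_
    linear_combination ⟪H - F, D - B⟫ * signedArea A B C * signedArea C D A * hpu -
      ‖D - B‖ ^ 2 * signedArea C D A * signedArea A B C * hqv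
  have hcross : cross (G - E) (H - F) = cross (C - A) (D - B) := by
    refine mul_right_cancel₀ (cross_diagonals_ne_zero hconv hABC) ?_
    rw [cross_mul_cross, cross_mul_cross, real_inner_self_eq_norm_sq, real_inner_self_eq_norm_sq,
      real_inner_comm (C - A) (D - B)]
    linear_combination hprod - ⟪H - F, C - A⟫ * hpv + ⟪C - A, D - B⟫ * hqu
  rw [quadArea_eq_abs_cross_diagonals, quadArea_eq_abs_cross_diagonals, hcross]
end

section
/- Let ABCD be an orthodiagonal quadrilateral with diagonals meeting at P (AC ⊥ BD). Then P lies on the nine-point circle of each of the four triangles BCD, CDA, DAB, ABC; hence P is the Euler–Poncelet point of the quadrangle ABCD. -/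
/-!
If `F` is the foot of the altitude from `Y` onto the side `XZ`, the perpendicular bisector of the
midline `M_XY M_YZ` (which is parallel to `XZ`) is also the perpendicular bisector of the chord
`M_ZX F`: orthogonal projection onto `XZ` sends the midpoint `(X + 2Y + Z)/4` of the midline to the
midpoint `(M_ZX + F)/2` of the chord. Hence a centre equidistant from the three midpoints is
equidistant from `F` too. In an orthodiagonal quadrilateral `P` is such a foot in each of the four
triangles, the altitude from the vertex off a diagonal being carried by the other diagonal.
-/

/-- `P` lies on the nine-point circle of triangle `XYZ`, i.e. on the (unique) circle
through the three midpoints of the sides. -/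
def OnNinePointCircle (P X Y Z : EuclideanSpace ℝ (Fin 2)) : Prop :=
  ∀ (N : EuclideanSpace ℝ (Fin 2)) (r : ℝ),
    dist N (midpoint ℝ X Y) = r → dist N (midpoint ℝ Y Z) = r →
    dist N (midpoint ℝ Z X) = r → dist N P = r

open AffineSubspace
open scoped RealInnerProductSpace

theorem mem_perpBisector_midpoint_foot {V : Type*} [NormedAddCommGroup V]
    [InnerProductSpace ℝ V] {X Y Z F N : V}
    (hF : F ∈ line[ℝ, X, Z]) (hFY : ⟪Z - X, F - Y⟫ = 0)
    (hN : N ∈ perpBisector (midpoint ℝ X Y) (midpoint ℝ Y Z)) :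
    N ∈ perpBisector (midpoint ℝ Z X) F := by
  obtain ⟨t, hFt⟩ := mem_affineSpan_pair_iff_exists_lineMap_eq.1 hF
  rw [AffineMap.lineMap_apply_module] at hFt
  set m := midpoint ℝ (midpoint ℝ X Y) (midpoint ℝ Y Z)
  have hside : midpoint ℝ Y Z -ᵥ midpoint ℝ X Y = (2⁻¹ : ℝ) • (Z - X) := by
    simp only [vsub_eq_sub, midpoint_eq_smul_add, invOf_eq_inv]; module
  have hchord : F -ᵥ midpoint ℝ Z X = (t - 2⁻¹) • (Z - X) := by
    simp only [vsub_eq_sub, ← hFt, midpoint_eq_smul_add, invOf_eq_inv]; module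
  have hcentre : N -ᵥ midpoint ℝ (midpoint ℝ Z X) F = (N - m) + (2⁻¹ : ℝ) • (Y - F) := by
    simp only [vsub_eq_sub, m, ← hFt, midpoint_eq_smul_add, invOf_eq_inv]; module
  have hNm : ⟪N - m, Z - X⟫ = 0 := by
    rw [mem_perpBisector_iff_inner_eq_zero, hside, inner_smul_right] at hN
    simpa using hN
  rw [mem_perpBisector_iff_inner_eq_zero, hcentre, hchord, inner_smul_right, inner_add_left,
    real_inner_smul_left, hNm, ← neg_sub F Y, inner_neg_left, real_inner_comm, hFY]
  ring

theorem onNinePointCircle_of_foot {X Y Z F : EuclideanSpace ℝ (Fin 2)}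
    (hF : F ∈ line[ℝ, X, Z]) (hFY : ⟪Z - X, F - Y⟫ = 0) :
    OnNinePointCircle F X Y Z := by
  intro N r hXY hYZ hZX
  have hN := mem_perpBisector_midpoint_foot hF hFY
    (mem_perpBisector_iff_dist_eq.2 (hXY.trans hYZ.symm))
  exact (mem_perpBisector_iff_dist_eq.1 hN).symm.trans hZX

theorem orthodiagonal_diagonal_point_on_ninePoint_circles_general
    (A B C D P : EuclideanSpace ℝ (Fin 2))
    (hconv : P ∈ segment ℝ A C ∧ P ∈ segment ℝ B D)
    (hperp : (inner ℝ (C - A) (D - B) : ℝ) = 0) :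
    OnNinePointCircle P B C D ∧ OnNinePointCircle P C D A ∧
    OnNinePointCircle P D A B ∧ OnNinePointCircle P A B C := by
  have hPAC : P ∈ line[ℝ, A, C] := (mem_segment_iff_wbtw.1 hconv.1).mem_affineSpan
  have hPBD : P ∈ line[ℝ, B, D] := (mem_segment_iff_wbtw.1 hconv.2).mem_affineSpan
  have hortho : line[ℝ, A, C].direction ⟂ line[ℝ, B, D].direction := by
    simpa [direction_affineSpan, vectorSpan_pair_rev] using hperp
  have hA := left_mem_affineSpan_pair ℝ A C
  have hC := right_mem_affineSpan_pair ℝ A C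
  have hB := left_mem_affineSpan_pair ℝ B D
  have hD := right_mem_affineSpan_pair ℝ B D
  refine ⟨onNinePointCircle_of_foot hPBD ?_,
    onNinePointCircle_of_foot (by rwa [affineSpan_pair_comm]) ?_,
    onNinePointCircle_of_foot (by rwa [affineSpan_pair_comm]) ?_,
    onNinePointCircle_of_foot hPAC ?_⟩
  · exact hortho.symm.inner_eq (vsub_mem_direction hD hB) (vsub_mem_direction hPAC hC)
  · exact hortho.inner_eq (vsub_mem_direction hA hC) (vsub_mem_direction hPBD hD)
  · exact hortho.symm.inner_eq (vsub_mem_direction hB hD) (vsub_mem_direction hPAC hA)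
  · exact hortho.inner_eq (vsub_mem_direction hC hA) (vsub_mem_direction hPBD hB)

theorem orthodiagonal_diagonal_point_on_ninePoint_circles
    (A B C D P : EuclideanSpace ℝ (Fin 2))
    (hconv : P ∈ segment ℝ A C ∧ P ∈ segment ℝ B D)
    (hperp : (inner ℝ (C - A) (D - B) : ℝ) = 0)
    (h₁ : ¬ Collinear ℝ ({A, B, C} : Set (EuclideanSpace ℝ (Fin 2))))
    (h₂ : ¬ Collinear ℝ ({A, B, D} : Set (EuclideanSpace ℝ (Fin 2))))
    (h₃ : ¬ Collinear ℝ ({A, C, D} : Set (EuclideanSpace ℝ (Fin 2))))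
    (h₄ : ¬ Collinear ℝ ({B, C, D} : Set (EuclideanSpace ℝ (Fin 2)))) :
    OnNinePointCircle P B C D ∧ OnNinePointCircle P C D A ∧
    OnNinePointCircle P D A B ∧ OnNinePointCircle P A B C :=
  orthodiagonal_diagonal_point_on_ninePoint_circles_general A B C D P hconv hperp
end

section
/- Let ABCD be a square. Let E, F, G, H be the first Brocard points of triangles BCD, CDA, DAB, ABC respectively. Then the area of ABCD equals 5 times the area of EFGH. -/
/-- The first Brocard point of triangle `PQR`, with barycentric coordinates
`(a²c² : b²a² : c²b²)` where `a = QR`, `b = RP`, `c = PQ`. -/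
noncomputable def brocardPoint (P Q R : EuclideanSpace ℝ (Fin 2)) : EuclideanSpace ℝ (Fin 2) :=
  let a := dist Q R
  let b := dist R P
  let c := dist P Q
  (a^2 * c^2 + b^2 * a^2 + c^2 * b^2)⁻¹ •
    ((a^2 * c^2) • P + (b^2 * a^2) • Q + (c^2 * b^2) • R)

open RealInnerProductSpace

theorem quadArea_circulant (a b c : ℝ) (A B C D : EuclideanSpace ℝ (Fin 2)) :
    quadArea (a • B + b • C + c • D) (a • C + b • D + c • A) (a • D + b • A + c • B)
      (a • A + b • B + c • C) = (b ^ 2 + (a - c) ^ 2) * quadArea A B C D := by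
  simp only [quadArea, PiLp.add_apply, PiLp.smul_apply, smul_eq_mul]
  rw [← abs_of_nonneg (by positivity : 0 ≤ b ^ 2 + (a - c) ^ 2), mul_div_assoc', ← abs_mul]
  ring_nf

theorem dist_sq_eq_two_mul_of_isoscelesRight {P Q R : EuclideanSpace ℝ (Fin 2)}
    (hiso : dist P Q = dist Q R) (hright : ⟪P - Q, R - Q⟫ = 0) :
    dist R P ^ 2 = 2 * dist P Q ^ 2 := by
  have hpyth := (norm_sub_sq_eq_norm_sq_add_norm_sq_iff_real_inner_eq_zero _ _).2
    (real_inner_comm (P - Q) (R - Q) ▸ hright)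
  rw [sub_sub_sub_cancel_right, ← dist_eq_norm, ← dist_eq_norm, ← dist_eq_norm,
    dist_comm R Q, ← hiso] at hpyth
  linear_combination hpyth

theorem brocardPoint_of_isoscelesRight {P Q R : EuclideanSpace ℝ (Fin 2)} (hPQ : P ≠ Q)
    (hiso : dist P Q = dist Q R) (hright : ⟪P - Q, R - Q⟫ = 0) :
    brocardPoint P Q R = (1 / 5 : ℝ) • P + (2 / 5 : ℝ) • Q + (2 / 5 : ℝ) • R := by
  have hRP := dist_sq_eq_two_mul_of_isoscelesRight hiso hright
  have hs : dist P Q ≠ 0 := dist_ne_zero.2 hPQ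
  ext i
  simp only [brocardPoint, ← hiso, hRP, PiLp.add_apply, PiLp.smul_apply, smul_eq_mul]
  field_simp
  ring

def IsSquareQuad (A B C D : EuclideanSpace ℝ (Fin 2)) : Prop :=
  A ≠ B ∧ ⟪B - A, C - B⟫ = 0 ∧ dist A B = dist B C ∧ D = A + (C - B)

namespace IsSquareQuad

variable {A B C D : EuclideanSpace ℝ (Fin 2)}

theorem rotate (h : IsSquareQuad A B C D) : IsSquareQuad B C D A := by
  obtain ⟨hAB, hperp, hlen, rfl⟩ := h
  refine ⟨?_, ?_, ?_, by abel⟩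
  · rw [← dist_pos, ← hlen]
    exact dist_pos.2 hAB
  · rw [show A + (C - B) - C = -(B - A) by abel, inner_neg_right, real_inner_comm, hperp,
      neg_zero]
  · rw [hlen.symm, dist_eq_norm, dist_eq_norm, show C - (A + (C - B)) = B - A by abel,
      norm_sub_rev]

theorem brocardPoint_eq (h : IsSquareQuad A B C D) :
    brocardPoint A B C = (1 / 5 : ℝ) • A + (2 / 5 : ℝ) • B + (2 / 5 : ℝ) • C := by
  obtain ⟨hAB, hperp, hlen, -⟩ := h
  refine brocardPoint_of_isoscelesRight hAB hlen ?_
  rw [← neg_sub B A, inner_neg_left, hperp, neg_zero]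

end IsSquareQuad

theorem square_brocard_central_quadrilateral_area
    (A B C D : EuclideanSpace ℝ (Fin 2))
    (hAB : A ≠ B)
    (hperp : (inner ℝ (B - A) (C - B) : ℝ) = 0)
    (hlen : dist A B = dist B C)
    (hD : D = A + (C - B)) :
    quadArea A B C D =
      5 * quadArea (brocardPoint B C D) (brocardPoint C D A)
        (brocardPoint D A B) (brocardPoint A B C) := by
  have hABCD : IsSquareQuad A B C D := ⟨hAB, hperp, hlen, hD⟩
  have hBCDA := hABCD.rotate
  have hCDAB := hBCDA.rotate
  have hDABC := hCDAB.rotate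
  rw [hBCDA.brocardPoint_eq, hCDAB.brocardPoint_eq, hDABC.brocardPoint_eq,
    hABCD.brocardPoint_eq, quadArea_circulant]
  ring
end

section
/- Let ABCD be a parallelogram (so A + C = B + D). Let f be any 'power point' center: in barycentric coordinates relative to a triangle with sides a,b,c, the center is (a^k·a : b^k·b : c^k·c) for a fixed real k (trilinear center function a^k). Let E, F, G, H be the f-points of triangles BCD, CDA, DAB, ABC respectively. Then lines EG and FH pass through the center of the parallelogram, the intersection of diagonals AC and BD; i.e., ABCD and EFGH have a common diagonal point. -/
/-- The "power point" triangle center with trilinear center function `a^k`,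
i.e. barycentric coordinates `(a^(k+1) : b^(k+1) : c^(k+1))` for triangle `XYZ`
with `a = YZ`, `b = ZX`, `c = XY`. -/
noncomputable def powerPoint (k : ℝ) (X Y Z : EuclideanSpace ℝ (Fin 2)) :
    EuclideanSpace ℝ (Fin 2) :=
  let u := dist Y Z ^ (k + 1)
  let v := dist Z X ^ (k + 1)
  let w := dist X Y ^ (k + 1)
  (u + v + w)⁻¹ • (u • X + v • Y + w • Z)

theorem parallelogram_powerPoint_common_diagonal_point
    (k : ℝ) (A B C D : EuclideanSpace ℝ (Fin 2))
    (hnc : ¬ Collinear ℝ ({A, B, C} : Set (EuclideanSpace ℝ (Fin 2))))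
    (hpara : A + C = B + D) :
    midpoint ℝ (powerPoint k B C D) (powerPoint k D A B) = midpoint ℝ A C ∧
    midpoint ℝ (powerPoint k C D A) (powerPoint k A B C) = midpoint ℝ A C := by
  -- distinctness of points
  have hAB : A ≠ B := by
    rintro rfl
    exact hnc (by simpa [Set.insert_comm] using collinear_pair ℝ A C)
  have hBC : B ≠ C := by
    rintro rfl
    exact hnc (by simpa using collinear_pair ℝ A B)
  have hAC : A ≠ C := by
    rintro rfl
    exact hnc (by simpa [Set.pair_comm, Set.insert_comm] using collinear_pair ℝ A B)
  have hCD : C ≠ D := by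
    intro h
    subst h
    exact hAB (by linear_combination (norm := module) hpara)
  have hDA : D ≠ A := by
    intro h
    subst h
    exact hBC (by linear_combination (norm := module) (-1 : ℝ) • hpara)
  have hDB : D ≠ B := by
    intro h
    rw [h] at hpara
    have hB : B = midpoint ℝ A C := by
      rw [midpoint_eq_smul_add]
      have h2 : (2 : ℝ) • B = A + C := by
        rw [two_smul, hpara]
      rw [← h2, smul_smul]
      norm_num
    apply hnc
    have hmem : B ∈ line[ℝ, A, C] := by
      rw [hB, ← lineMap_one_half]
      exact AffineMap.lineMap_mem_affineSpan_pair _ _ _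
    have := collinear_insert_of_mem_affineSpan_pair hmem
    simpa [Set.insert_comm] using this
  -- equal opposite sides
  have hdCD : dist C D = dist A B := by
    rw [dist_comm A B, dist_eq_norm, dist_eq_norm]
    congr 1
    linear_combination (norm := module) hpara
  have hdBC : dist B C = dist D A := by
    rw [dist_comm D A, dist_eq_norm, dist_eq_norm]
    congr 1
    linear_combination (norm := module) (-1 : ℝ) • hpara
  constructor
  · -- E = powerPoint k B C D, G = powerPoint k D A B
    set u := dist C D ^ (k + 1) with hu
    set v := dist D B ^ (k + 1) with hv
    set w := dist B C ^ (k + 1) with hw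
    have hupos : 0 < u := Real.rpow_pos_of_pos (dist_pos.2 hCD) _
    have hvpos : 0 < v := Real.rpow_pos_of_pos (dist_pos.2 hDB) _
    have hwpos : 0 < w := Real.rpow_pos_of_pos (dist_pos.2 hBC) _
    have hs : u + v + w ≠ 0 := by positivity
    have hE : powerPoint k B C D = (u + v + w)⁻¹ • (u • B + v • C + w • D) := rfl
    have hG : powerPoint k D A B = (u + v + w)⁻¹ • (u • D + v • A + w • B) := by
      unfold powerPoint
      rw [hu, hv, hw, hdCD, hdBC, dist_comm D B, dist_comm D A]
    have key : powerPoint k B C D + powerPoint k D A B = A + C := by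
      rw [hE, hG, ← smul_add]
      have hsum : u • B + v • C + w • D + (u • D + v • A + w • B) =
          (u + v + w) • (A + C) := by
        linear_combination (norm := module) (-(u + w)) • hpara
      rw [hsum, smul_smul, inv_mul_cancel₀ hs, one_smul]
    rw [midpoint_eq_smul_add, midpoint_eq_smul_add, key]
  · -- F = powerPoint k C D A, H = powerPoint k A B C
    set u := dist D A ^ (k + 1) with hu
    set v := dist A C ^ (k + 1) with hv
    set w := dist C D ^ (k + 1) with hw
    have hupos : 0 < u := Real.rpow_pos_of_pos (dist_pos.2 hDA) _
    have hvpos : 0 < v := Real.rpow_pos_of_pos (dist_pos.2 hAC) _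
    have hwpos : 0 < w := Real.rpow_pos_of_pos (dist_pos.2 hCD) _
    have hs : u + v + w ≠ 0 := by positivity
    have hF : powerPoint k C D A = (u + v + w)⁻¹ • (u • C + v • D + w • A) := rfl
    have hH : powerPoint k A B C = (u + v + w)⁻¹ • (u • A + v • B + w • C) := by
      unfold powerPoint
      rw [hu, hv, hw, hdCD, hdBC, dist_comm C A]
    have key : powerPoint k C D A + powerPoint k A B C = A + C := by
      rw [hF, hH, ← smul_add]
      have hsum : u • C + v • D + w • A + (u • A + v • B + w • C) =
          (u + v + w) • (A + C) := by
        linear_combination (norm := module) (-v) • hpara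
      rw [hsum, smul_smul, inv_mul_cancel₀ hs, one_smul]
    rw [midpoint_eq_smul_add, midpoint_eq_smul_add, key]
end
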